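/- Let R be a probability measure on a measurable space Ω and let P be a probability measure on Ω with P ≪ R. Then H(P|R) = sup { ∫ u dP − log ∫ e^u dR : u : Ω → ℝ measurable, ∫ e^u dR < ∞ and ∫ u⁻ dP < ∞ } ∈ [0, ∞], where u⁻ := max(−u, 0), so that ∫ u dP ∈ (−∞, ∞] is well-defined for each admissible u. -/

import Mathlib

/-!
For admissible `u`, the bound `u ≤ log (dP/dR) + e^u (dP/dR)⁻¹` makes `u` integrable against `P`
when `H(P|R) < ∞`, and Gibbs' inequality for `P` against the tilted measure `e^u R / ∫ e^u dR`
reads `∫ u dP - log ∫ e^u dR ≤ H(P|R)`. Conversely, the truncations `u_n = min (log (dP/dR)) n`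
have the same negative part as `log (dP/dR)` (finite, as `-x log x ≤ 1`), positive parts
increasing to that of `log (dP/dR)`, and `∫ e^{u_n} dR → ∫ (dP/dR) dR = 1` by dominated
convergence, so their values converge to `H(P|R)`.
-/

open MeasureTheory Real Filter Classical
open scoped ENNReal

/-- Relative entropy `H(P|R) ∈ [0,∞]`: the integral `∫ log(dP/dR) dP` if `P ≪ R`
(with value `+∞` when `log(dP/dR)` is not `P`-integrable), and `+∞` otherwise. -/
noncomputable def relEntropy {Ω : Type*} [MeasurableSpace Ω] (P R : Measure Ω) : EReal :=
  if P ≪ R ∧ Integrable (llr P R) P then ((∫ ω, llr P R ω ∂P : ℝ) : EReal) else ⊤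

open scoped Topology

lemma EReal.tendsto_sub {ι : Type*} {l : Filter ι} {a b : ι → EReal} {A B : EReal}
    (ha : Tendsto a l (𝓝 A)) (hb : Tendsto b l (𝓝 B)) (htop : A ≠ ⊤ ∨ B ≠ ⊤)
    (hbot : A ≠ ⊥ ∨ B ≠ ⊥) : Tendsto (fun i => a i - b i) l (𝓝 (A - B)) := by
  simp only [sub_eq_add_neg]
  exact (EReal.continuousAt_add (by simpa using htop) (by simpa using hbot)).tendsto.comp
    (ha.prodMk_nhds hb.neg)

section ERealIntegral

variable {α : Type*} [MeasurableSpace α] {μ : Measure α} {u : α → ℝ}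

-- The integral of `u` with values in `(-∞, ∞]`; meaningful when `∫⁻ u⁻ dμ < ∞`.
noncomputable def erealIntegral (μ : Measure α) (u : α → ℝ) : EReal :=
  ((∫⁻ x, ENNReal.ofReal (u x) ∂μ : ℝ≥0∞) : EReal)
    - ((∫⁻ x, ENNReal.ofReal (-u x) ∂μ : ℝ≥0∞) : EReal)

lemma integrable_of_lintegral_ofReal_ne_top (hu : AEMeasurable u μ)
    (hpos : ∫⁻ x, ENNReal.ofReal (u x) ∂μ ≠ ⊤) (hneg : ∫⁻ x, ENNReal.ofReal (-u x) ∂μ ≠ ⊤) :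
    Integrable u μ := by
  have h := (integrable_toReal_of_lintegral_ne_top hu.ennreal_ofReal hpos).sub
    (integrable_toReal_of_lintegral_ne_top hu.neg.ennreal_ofReal hneg)
  refine h.congr (ae_of_all _ fun x => ?_)
  simp only [Pi.sub_apply, Pi.neg_apply, ENNReal.toReal_ofReal', max_zero_sub_max_neg_zero_eq_self]

lemma erealIntegral_eq_integral (hu : Integrable u μ) : erealIntegral μ u = ∫ x, u x ∂μ := by
  have hneg : ∫⁻ x, ENNReal.ofReal (-u x) ∂μ < ⊤ := hu.neg.lintegral_lt_top
  rw [erealIntegral, integral_eq_lintegral_pos_part_sub_lintegral_neg_part hu, EReal.coe_sub,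
    EReal.coe_ennreal_toReal hu.lintegral_lt_top.ne, EReal.coe_ennreal_toReal hneg.ne]

lemma erealIntegral_eq_top (hu : AEMeasurable u μ) (hneg : ∫⁻ x, ENNReal.ofReal (-u x) ∂μ ≠ ⊤)
    (hint : ¬ Integrable u μ) : erealIntegral μ u = ⊤ := by
  have hpos : ∫⁻ x, ENNReal.ofReal (u x) ∂μ = ⊤ := by
    by_contra hpos
    exact hint (integrable_of_lintegral_ofReal_ne_top hu hpos hneg)
  rw [erealIntegral, hpos, EReal.coe_ennreal_top, EReal.top_sub (by simpa using hneg)]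

end ERealIntegral

section RelEntropy

variable {Ω : Type*} [MeasurableSpace Ω] {P R : Measure Ω} {u : Ω → ℝ}

lemma mul_exp_sub_log_le {t : ℝ} (ht : 0 ≤ t) (x : ℝ) : t * exp (x - log t) ≤ exp x := by
  rcases ht.eq_or_lt with rfl | ht
  · simpa using (exp_pos x).le
  · rw [exp_sub, exp_log ht, mul_div_cancel₀ _ ht.ne']

lemma integrable_exp_sub_llr [SigmaFinite P] [P.HaveLebesgueDecomposition R] (hPR : P ≪ R)
    (hu : Measurable u) (hexp : Integrable (fun ω => exp (u ω)) R) :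
    Integrable (fun ω => exp (u ω - llr P R ω)) P := by
  refine (integrable_rnDeriv_smul_iff hPR).mp (hexp.mono' ?_ (ae_of_all _ fun ω => ?_))
  · exact (Measure.measurable_rnDeriv P R).ennreal_toReal.aestronglyMeasurable.smul
      (hu.sub (measurable_llr P R)).exp.aestronglyMeasurable
  · rw [Real.norm_eq_abs, abs_of_nonneg (by positivity), smul_eq_mul]
    exact mul_exp_sub_log_le ENNReal.toReal_nonneg _

lemma integrable_of_integrable_exp_of_integrable_llr [SigmaFinite P] [P.HaveLebesgueDecomposition R]
    (hPR : P ≪ R) (hllr : Integrable (llr P R) P) (hu : Measurable u)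
    (hexp : Integrable (fun ω => exp (u ω)) R) (hneg : ∫⁻ ω, ENNReal.ofReal (-u ω) ∂P ≠ ⊤) :
    Integrable u P := by
  have hle : ∀ ω, u ω ≤ llr P R ω + exp (u ω - llr P R ω) := fun ω => by
    linarith [add_one_le_exp (u ω - llr P R ω)]
  refine integrable_of_lintegral_ofReal_ne_top hu.aemeasurable (ne_top_of_le_ne_top ?_
    (lintegral_mono fun ω => ENNReal.ofReal_le_ofReal (hle ω))) hneg
  exact (hllr.add (integrable_exp_sub_llr hPR hu hexp)).lintegral_lt_top.ne

lemma integral_sub_log_integral_exp_le_integral_llr [IsProbabilityMeasure P] [SigmaFinite R]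
    [NeZero R] (hPR : P ≪ R) (hu : Integrable u P) (hexp : Integrable (fun ω => exp (u ω)) R)
    (hllr : Integrable (llr P R) P) :
    ∫ ω, u ω ∂P - log (∫ ω, exp (u ω) ∂ R) ≤ ∫ ω, llr P R ω ∂P := by
  have := isProbabilityMeasure_tilted hexp
  have hgibbs := InformationTheory.integral_llr_add_sub_measure_univ_nonneg
    (hPR.trans (absolutelyContinuous_tilted hexp)) (integrable_llr_tilted_right hPR hu hllr hexp)
  rw [integral_llr_tilted_right hPR hu hexp hllr] at hgibbs
  simp only [probReal_univ] at hgibbs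
  linarith

lemma erealIntegral_sub_log_integral_exp_le_relEntropy [IsProbabilityMeasure P] [SigmaFinite R]
    [NeZero R] (hPR : P ≪ R) (hu : Measurable u) (hexp : Integrable (fun ω => exp (u ω)) R)
    (hneg : ∫⁻ ω, ENNReal.ofReal (-u ω) ∂P ≠ ⊤) :
    erealIntegral P u - log (∫ ω, exp (u ω) ∂ R) ≤ relEntropy P R := by
  by_cases hllr : Integrable (llr P R) P
  · have hui := integrable_of_integrable_exp_of_integrable_llr hPR hllr hu hexp hneg
    rw [relEntropy, if_pos ⟨hPR, hllr⟩, erealIntegral_eq_integral hui]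
    exact_mod_cast integral_sub_log_integral_exp_le_integral_llr hPR hui hexp hllr
  · simp [relEntropy, hllr]

lemma ENNReal.mul_ofReal_neg_log_toReal_le_one (x : ℝ≥0∞) :
    x * ENNReal.ofReal (-Real.log x.toReal) ≤ 1 := by
  rcases eq_or_ne x ⊤ with rfl | hx
  · simp
  rw [← ENNReal.ofReal_toReal hx, ← ENNReal.ofReal_mul ENNReal.toReal_nonneg,
    ENNReal.toReal_ofReal ENNReal.toReal_nonneg, ENNReal.ofReal_le_one]
  have := negMulLog_le_one_sub_self (ENNReal.toReal_nonneg (a := x))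
  rw [negMulLog] at this
  linarith [ENNReal.toReal_nonneg (a := x)]

lemma lintegral_ofReal_neg_llr_le [P.HaveLebesgueDecomposition R] (hPR : P ≪ R) :
    ∫⁻ ω, ENNReal.ofReal (-llr P R ω) ∂P ≤ R Set.univ :=
  calc ∫⁻ ω, ENNReal.ofReal (-llr P R ω) ∂P
      = ∫⁻ ω, P.rnDeriv R ω * ENNReal.ofReal (-log (P.rnDeriv R ω).toReal) ∂ R :=
        (lintegral_rnDeriv_mul hPR (measurable_llr P R).neg.ennreal_ofReal.aemeasurable).symm
    _ ≤ ∫⁻ _, 1 ∂ R := lintegral_mono fun _ => ENNReal.mul_ofReal_neg_log_toReal_le_one _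
    _ = R Set.univ := lintegral_one

lemma relEntropy_eq_erealIntegral_llr [P.HaveLebesgueDecomposition R] [IsFiniteMeasure R]
    (hPR : P ≪ R) : relEntropy P R = erealIntegral P (llr P R) := by
  by_cases hllr : Integrable (llr P R) P
  · rw [relEntropy, if_pos ⟨hPR, hllr⟩, erealIntegral_eq_integral hllr]
  · rw [relEntropy, if_neg fun h => hllr h.2, erealIntegral_eq_top (measurable_llr P R).aemeasurable
      (ne_top_of_le_ne_top (measure_ne_top R _) (lintegral_ofReal_neg_llr_le hPR)) hllr]

end RelEntropy

section Truncation

variable {Ω : Type*} [MeasurableSpace Ω] {P R : Measure Ω}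

lemma tendsto_min_natCast (x : ℝ) : Tendsto (fun n : ℕ => min x n) atTop (𝓝 x) :=
  tendsto_const_nhds.congr' <| (tendsto_natCast_atTop_atTop.eventually_ge_atTop x).mono
    fun _ hn => (min_eq_left hn).symm

-- On `{dP/dR = 0}` the junk value `llr P R = log 0 = 0` is replaced by `-n`, so that the
-- `R`-mass of that set does not contribute to `∫ e^{llrTrunc n} dR` in the limit.
noncomputable def llrTrunc (P R : Measure Ω) (n : ℕ) (ω : Ω) : ℝ :=
  if P.rnDeriv R ω = 0 then -n else min (llr P R ω) n

lemma measurable_llrTrunc (n : ℕ) : Measurable (llrTrunc P R n) :=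
  Measurable.ite (Measure.measurable_rnDeriv P R (measurableSet_singleton 0)) measurable_const
    ((measurable_llr P R).min measurable_const)

lemma llrTrunc_ae_eq [P.HaveLebesgueDecomposition R] (hPR : P ≪ R) :
    ∀ᵐ ω ∂P, ∀ n, llrTrunc P R n ω = min (llr P R ω) n := by
  filter_upwards [Measure.rnDeriv_pos hPR] with ω hω n
  rw [llrTrunc, if_neg hω.ne']

lemma exp_llrTrunc_le (n : ℕ) (ω : Ω) : exp (llrTrunc P R n ω) ≤ (P.rnDeriv R ω).toReal + 1 := by
  have ht : 0 ≤ (P.rnDeriv R ω).toReal := ENNReal.toReal_nonneg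
  unfold llrTrunc
  split_ifs
  · have : exp (-n) ≤ 1 := exp_le_one_iff.mpr (by simp)
    linarith
  · refine (exp_le_exp.mpr (min_le_left _ _)).trans ?_
    rcases ht.eq_or_lt with h | h
    · simp [llr, ← h]
    · rw [llr, exp_log h]
      linarith

lemma integrable_exp_llrTrunc [IsFiniteMeasure P] [IsFiniteMeasure R] (n : ℕ) :
    Integrable (fun ω => exp (llrTrunc P R n ω)) R :=
  (Measure.integrable_toReal_rnDeriv.add (integrable_const 1)).mono'
    (measurable_llrTrunc n).exp.aestronglyMeasurable
    (ae_of_all _ fun ω => by rw [norm_of_nonneg (exp_pos _).le]; exact exp_llrTrunc_le n ω)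

lemma tendsto_integral_exp_llrTrunc [IsFiniteMeasure P] [IsFiniteMeasure R] (hPR : P ≪ R) :
    Tendsto (fun n => ∫ ω, exp (llrTrunc P R n ω) ∂ R) atTop (𝓝 (P.real Set.univ)) := by
  rw [← Measure.integral_toReal_rnDeriv hPR]
  refine tendsto_integral_of_dominated_convergence (fun ω => (P.rnDeriv R ω).toReal + 1)
    (fun n => (measurable_llrTrunc n).exp.aestronglyMeasurable)
    (Measure.integrable_toReal_rnDeriv.add (integrable_const 1))
    (fun n => ae_of_all _ fun ω => ?_) ?_
  · rw [norm_of_nonneg (exp_pos _).le]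
    exact exp_llrTrunc_le n ω
  filter_upwards [Measure.rnDeriv_lt_top P R] with ω hω
  by_cases h0 : P.rnDeriv R ω = 0
  · simp only [llrTrunc, h0, ENNReal.toReal_zero]
    exact tendsto_exp_atBot.comp (tendsto_neg_atTop_atBot.comp tendsto_natCast_atTop_atTop)
  · have ht : 0 < (P.rnDeriv R ω).toReal := ENNReal.toReal_pos h0 hω.ne
    have h := (continuous_exp.tendsto _).comp (tendsto_min_natCast (llr P R ω))
    simpa only [Function.comp_def, llr, exp_log ht, llrTrunc, if_neg h0] using h

lemma lintegral_ofReal_neg_llrTrunc [P.HaveLebesgueDecomposition R] (hPR : P ≪ R) (n : ℕ) :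
    ∫⁻ ω, ENNReal.ofReal (-llrTrunc P R n ω) ∂P = ∫⁻ ω, ENNReal.ofReal (-llr P R ω) ∂P := by
  refine lintegral_congr_ae ?_
  filter_upwards [llrTrunc_ae_eq hPR] with ω hω
  rw [hω n, neg_inf, ENNReal.ofReal_max,
    ENNReal.ofReal_of_nonpos (by simp : -(n : ℝ) ≤ 0), max_eq_left zero_le]

lemma tendsto_lintegral_ofReal_llrTrunc [P.HaveLebesgueDecomposition R] (hPR : P ≪ R) :
    Tendsto (fun n => ∫⁻ ω, ENNReal.ofReal (llrTrunc P R n ω) ∂P) atTop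
      (𝓝 (∫⁻ ω, ENNReal.ofReal (llr P R ω) ∂P)) := by
  refine lintegral_tendsto_of_tendsto_of_monotone
    (fun n => (measurable_llrTrunc n).ennreal_ofReal.aemeasurable) ?_ ?_
  · filter_upwards [llrTrunc_ae_eq hPR] with ω hω m n hmn
    simp only [hω]
    exact ENNReal.ofReal_le_ofReal (min_le_min_left _ (Nat.cast_le.mpr hmn))
  · filter_upwards [llrTrunc_ae_eq hPR] with ω hω
    simp only [hω]
    exact (ENNReal.continuous_ofReal.tendsto _).comp (tendsto_min_natCast _)

lemma tendsto_erealIntegral_llrTrunc_sub_log [IsProbabilityMeasure P] [IsFiniteMeasure R]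
    (hPR : P ≪ R) :
    Tendsto (fun n => erealIntegral P (llrTrunc P R n) - log (∫ ω, exp (llrTrunc P R n ω) ∂ R))
      atTop (𝓝 (erealIntegral P (llr P R))) := by
  have hneg : ∫⁻ ω, ENNReal.ofReal (-llr P R ω) ∂P ≠ ⊤ :=
    ne_top_of_le_ne_top (measure_ne_top R _) (lintegral_ofReal_neg_llr_le hPR)
  have hlog : Tendsto (fun n => log (∫ ω, exp (llrTrunc P R n ω) ∂ R)) atTop (𝓝 0) := by
    have hZ := tendsto_integral_exp_llrTrunc hPR
    rw [probReal_univ] at hZ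
    simpa [Function.comp_def] using (continuousAt_log one_ne_zero).tendsto.comp hZ
  have hpart := EReal.tendsto_sub
    ((continuous_coe_ennreal_ereal.tendsto _).comp (tendsto_lintegral_ofReal_llrTrunc hPR))
    tendsto_const_nhds (Or.inr (EReal.coe_ennreal_eq_top_iff.not.mpr hneg))
    (Or.inl (EReal.coe_ennreal_ne_bot _))
  simpa [erealIntegral, lintegral_ofReal_neg_llrTrunc hPR] using
    EReal.tendsto_sub hpart (EReal.tendsto_coe.mpr hlog) (Or.inr (by simp)) (Or.inr (by simp))

end Truncation

/-- `H(P|R) = sup { ∫ u dP − log ∫ e^u dR : u measurable, ∫ e^u dR < ∞, ∫ u⁻ dP < ∞ }`.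
For admissible `u`, `∫ u dP ∈ (−∞,∞]` is well-defined; it is encoded in `EReal` as
`∫⁻ u⁺ dP − ∫⁻ u⁻ dP`, where the subtracted (negative-part) term is finite. -/
theorem relEntropy_eq_sup_integrable_exp_negPart {Ω : Type*} [MeasurableSpace Ω]
    (P R : Measure Ω) [IsProbabilityMeasure P] [IsProbabilityMeasure R] (hPR : P ≪ R) :
    relEntropy P R =
      sSup {x : EReal | ∃ u : Ω → ℝ, Measurable u ∧
        Integrable (fun ω => Real.exp (u ω)) R ∧
        (∫⁻ ω, ENNReal.ofReal (-(u ω)) ∂P) < ⊤ ∧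
        x = ((∫⁻ ω, ENNReal.ofReal (u ω) ∂P : ℝ≥0∞) : EReal)
              - ((∫⁻ ω, ENNReal.ofReal (-(u ω)) ∂P : ℝ≥0∞) : EReal)
              - ((Real.log (MeasureTheory.integral R (fun ω => Real.exp (u ω))) : ℝ) : EReal)} := by
  refine le_antisymm ?_ (sSup_le ?_)
  · rw [relEntropy_eq_erealIntegral_llr hPR]
    refine le_of_tendsto' (tendsto_erealIntegral_llrTrunc_sub_log hPR) fun n => le_sSup ?_
    refine ⟨llrTrunc P R n, measurable_llrTrunc n, integrable_exp_llrTrunc n, ?_, rfl⟩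
    rw [lintegral_ofReal_neg_llrTrunc hPR]
    exact (lintegral_ofReal_neg_llr_le hPR).trans_lt (measure_lt_top R _)
  · rintro _ ⟨u, hu, hexp, hneg, rfl⟩
    exact erealIntegral_sub_log_integral_exp_le_relEntropy hPR hu hexp hneg.ne
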